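/- Fix w ∈ I and elements a, b ∈ A_w, and let x ∈ A be the tuple with x(w) = a and x(k) = 0 for all k ≠ w, and y ∈ A the tuple with y(w) = b and y(k) = 0 for all k ≠ w. Then x and y are free over D in (A, E) if and only if a and b are free in the noncommutative probability space (A_w, φ_w). -/

import Mathlib

/-- The diagonal embedding `ι : (I → ℂ) → Π i, A i`, `ι d = (d i • 1)_{i}`. -/
noncomputable def diag {I : Type*} (A : I → Type*) [∀ i, Ring (A i)]
    [∀ i, Algebra ℂ (A i)] (d : I → ℂ) : ∀ i, A i :=
  fun i => d i • (1 : A i)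

/-- The componentwise conditional expectation `E : Π i, A i → (I → ℂ)`. -/
noncomputable def condExp {I : Type*} {A : I → Type*} [∀ i, Ring (A i)]
    [∀ i, Algebra ℂ (A i)] (φ : ∀ i, A i →ₗ[ℂ] ℂ) (x : ∀ i, A i) : I → ℂ :=
  fun i => φ i (x i)

/-- Two subalgebras `B₁, B₂` of `A = Π i, A i` are free over `D` with respect to
`E = condExp φ`: every alternating product of `E`-centered elements is `E`-centered. -/
def FreeOverD {I : Type*} {A : I → Type*} [∀ i, Ring (A i)] [∀ i, Algebra ℂ (A i)]
    (φ : ∀ i, A i →ₗ[ℂ] ℂ) (B₁ B₂ : Subalgebra ℂ (∀ i, A i)) : Prop :=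
  ∀ (n : ℕ), 1 ≤ n → ∀ (y : Fin n → ∀ i, A i) (c : Fin n → Bool),
    (∀ k, y k ∈ (if c k then B₁ else B₂)) →
    (∀ (k : Fin n) (h : (k : ℕ) + 1 < n), c k ≠ c ⟨(k : ℕ) + 1, h⟩) →
    (∀ k, condExp φ (y k) = 0) →
    condExp φ (List.ofFn y).prod = 0

/-- Two elements `x, y ∈ A` are free over `D` if the unital subalgebras generated by
`{x} ∪ ι(D)` and `{y} ∪ ι(D)` are free over `D`. -/
def ElemFreeOverD {I : Type*} {A : I → Type*} [∀ i, Ring (A i)] [∀ i, Algebra ℂ (A i)]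
    (φ : ∀ i, A i →ₗ[ℂ] ℂ) (x y : ∀ i, A i) : Prop :=
  FreeOverD φ (Algebra.adjoin ℂ ({x} ∪ Set.range (diag A)))
    (Algebra.adjoin ℂ ({y} ∪ Set.range (diag A)))

/-- Two unital subalgebras of a noncommutative probability space `(B, φ)` are free. -/
def FreeSubalgebras {B : Type*} [Ring B] [Algebra ℂ B] (φ : B →ₗ[ℂ] ℂ)
    (B₁ B₂ : Subalgebra ℂ B) : Prop :=
  ∀ (n : ℕ), 1 ≤ n → ∀ (y : Fin n → B) (c : Fin n → Bool),
    (∀ k, y k ∈ (if c k then B₁ else B₂)) →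
    (∀ (k : Fin n) (h : (k : ℕ) + 1 < n), c k ≠ c ⟨(k : ℕ) + 1, h⟩) →
    (∀ k, φ (y k) = 0) →
    φ (List.ofFn y).prod = 0

/-- Two elements of a noncommutative probability space `(B, φ)` are free if the unital
subalgebras they generate are free. -/
def FreePair {B : Type*} [Ring B] [Algebra ℂ B] (φ : B →ₗ[ℂ] ℂ) (a b : B) : Prop :=
  FreeSubalgebras φ (Algebra.adjoin ℂ {a}) (Algebra.adjoin ℂ {b})

/-! An element of the algebra generated by `Pi.single w v` and the diagonal is, at `w`, in the
algebra generated by `v`, and a scalar elsewhere; if it is `E`-centered the scalar is zero. So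
alternating products of centered elements vanish off `w`, while at `w` they are alternating
products in `(A_w, φ_w)`. Conversely `Pi.single w` sends centered elements of the algebra generated
by `v` to centered elements of the algebra generated by `Pi.single w v` and the diagonal. -/

open Algebra Set

lemma ofFn_prod_apply {I : Type*} {M : I → Type*} [∀ i, Monoid (M i)] {n : ℕ}
    (Y : Fin n → ∀ i, M i) (i : I) :
    (List.ofFn Y).prod i = (List.ofFn fun k => Y k i).prod := by
  rw [Pi.list_prod_apply, List.map_ofFn]
  rfl

section

variable {I : Type*} {A : I → Type*} [∀ i, Ring (A i)] [∀ i, Algebra ℂ (A i)]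

lemma diag_apply_mem (d : I → ℂ) (i : I) (T : Subalgebra ℂ (A i)) : diag A d i ∈ T := by
  rw [diag, ← Algebra.algebraMap_eq_smul_one]
  exact T.algebraMap_mem (d i)

variable [DecidableEq I]

lemma condExp_single (φ : ∀ i, A i →ₗ[ℂ] ℂ) (w : I) (z : A w) :
    condExp φ (Pi.single w z) = Pi.single w (φ w z) :=
  funext <| Pi.apply_single (fun i => φ i) (fun _ => map_zero _) w z

lemma single_mem_adjoin_single_union_range_diag (w : I) {v z : A w}
    (hz : z ∈ adjoin ℂ {v}) :
    Pi.single w z ∈ adjoin ℂ ({Pi.single w v} ∪ range (diag A)) := by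
  induction hz using Algebra.adjoin_induction with
  | mem x hx =>
    rw [mem_singleton_iff.1 hx]
    exact subset_adjoin (Or.inl rfl)
  | algebraMap r =>
    have : Pi.single w (algebraMap ℂ (A w) r) = diag A (Pi.single w r) := by
      rw [Algebra.algebraMap_eq_smul_one]
      exact funext fun j => (Pi.apply_single (fun i (c : ℂ) => c • (1 : A i))
        (fun _ => zero_smul ℂ 1) w r j).symm
    rw [this]
    exact subset_adjoin (Or.inr ⟨_, rfl⟩)
  | add x y _ _ hx hy => rw [Pi.single_add]; exact add_mem hx hy
  | mul x y _ _ hx hy => rw [Pi.single_mul]; exact mul_mem hx hy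

lemma adjoin_single_union_range_diag_le_comap_eval (w : I) (v : A w) (i : I)
    (T : Subalgebra ℂ (A i)) (hT : (Pi.single w v : ∀ i, A i) i ∈ T) :
    adjoin ℂ ({Pi.single w v} ∪ range (diag A)) ≤ T.comap (Pi.evalAlgHom ℂ A i) := by
  refine adjoin_le ?_
  rintro _ (rfl | ⟨d, rfl⟩)
  exacts [hT, diag_apply_mem d i T]

lemma apply_self_mem_adjoin (w : I) (v : A w) {x : ∀ i, A i}
    (hx : x ∈ adjoin ℂ ({Pi.single w v} ∪ range (diag A))) : x w ∈ adjoin ℂ {v} :=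
  adjoin_single_union_range_diag_le_comap_eval w v w (adjoin ℂ {v})
    (by rw [Pi.single_eq_same]; exact self_mem_adjoin_singleton ℂ v) hx

lemma apply_mem_bot_of_ne (w : I) (v : A w) {x : ∀ i, A i} {i : I} (hi : i ≠ w)
    (hx : x ∈ adjoin ℂ ({Pi.single w v} ∪ range (diag A))) : x i ∈ (⊥ : Subalgebra ℂ (A i)) :=
  adjoin_single_union_range_diag_le_comap_eval w v i ⊥
    (by rw [Pi.single_eq_of_ne hi]; exact zero_mem _) hx

end

lemma eq_zero_of_mem_bot_of_map_eq_zero {B : Type*} [Ring B] [Algebra ℂ B] (φ : B →ₗ[ℂ] ℂ)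
    (hφ : φ 1 = 1) {z : B} (hz : z ∈ (⊥ : Subalgebra ℂ B)) (h : φ z = 0) : z = 0 := by
  obtain ⟨c, rfl⟩ := Algebra.mem_bot.1 hz
  rw [Algebra.algebraMap_eq_smul_one, map_smul, hφ, smul_eq_mul, mul_one] at h
  rw [h, map_zero]

theorem single_same_index_free_iff_general
    {I : Type*} [DecidableEq I] {A : I → Type*} [∀ i, Ring (A i)]
    [∀ i, Algebra ℂ (A i)] (φ : ∀ i, A i →ₗ[ℂ] ℂ) (hφ : ∀ i, φ i 1 = 1)
    (w : I) (a b : A w) :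
    ElemFreeOverD φ (Pi.single w a) (Pi.single w b) ↔ FreePair (φ w) a b := by
  constructor
  · intro H n hn y c hmem halt hcent
    have hsingle k : Pi.single w (y k) ∈ if c k then adjoin ℂ ({Pi.single w a} ∪ range (diag A))
        else adjoin ℂ ({Pi.single w b} ∪ range (diag A)) := by
      have hk := hmem k
      split_ifs at hk ⊢ <;> exact single_mem_adjoin_single_union_range_diag w hk
    have hcent' k : condExp φ (Pi.single w (y k)) = 0 := by
      rw [condExp_single, hcent k, Pi.single_zero]
    simpa [condExp, ofFn_prod_apply] using congrFun (H n hn _ c hsingle halt hcent') w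
  · intro H n hn Y c hmem halt hcent
    funext i
    change φ i ((List.ofFn Y).prod i) = 0
    rw [ofFn_prod_apply]
    by_cases hi : i = w
    · subst hi
      refine H n hn _ c (fun k => ?_) halt (fun k => congrFun (hcent k) i)
      have hk := hmem k
      split_ifs at hk ⊢ <;> exact apply_self_mem_adjoin i _ hk
    · obtain ⟨m, rfl⟩ := Nat.exists_eq_add_one_of_ne_zero (by omega : n ≠ 0)
      have hbot : Y 0 i ∈ (⊥ : Subalgebra ℂ (A i)) := by
        have h0 := hmem 0
        split_ifs at h0 <;> exact apply_mem_bot_of_ne w _ hi h0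
      rw [List.ofFn_succ, List.prod_cons,
        eq_zero_of_mem_bot_of_map_eq_zero (φ i) (hφ i) hbot (congrFun (hcent 0) i), zero_mul,
        map_zero]

/-- the tuples supported at the same index `w` with values `a, b ∈ A_w`
are free over `D` in `(A, E)` iff `a` and `b` are free in `(A_w, φ_w)`. -/
theorem single_same_index_free_iff
    {I : Type*} [Nonempty I] [DecidableEq I] {A : I → Type*} [∀ i, Ring (A i)]
    [∀ i, Algebra ℂ (A i)] (φ : ∀ i, A i →ₗ[ℂ] ℂ) (hφ : ∀ i, φ i 1 = 1)
    (w : I) (a b : A w) :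
    ElemFreeOverD φ (Pi.single w a) (Pi.single w b) ↔ FreePair (φ w) a b :=
  single_same_index_free_iff_general φ hφ w a b
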